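/- Let S be a finite totally ordered set with values p : S → [0,1] sorted increasingly, and let Γ := {γ ∈ 𝒫(S) : l(s) ≤ γ(s) ≤ u(s) for all s} be a nonempty interval set of distributions (so Σ l(s) ≤ 1 ≤ Σ u(s)). Then a distribution γ* minimizing Σ_s γ(s)p(s) over Γ is obtained by the O-maximization greedy rule: set γ*(s) = l(s) for all s, then allocate the remaining mass 1 − Σ l(s) to states in increasing order of p, each up to its capacity u(s) − l(s). Formally, for the greedy γ*, Σ_s γ*(s)p(s) = min_{γ∈Γ} Σ_s γ(s)p(s). -/
import Mathlib

theorem stmt_12 {S : Type*} [Fintype S] [LinearOrder S]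
    (p : S → ℝ) (hp : Monotone p) (hp01 : ∀ s, 0 ≤ p s ∧ p s ≤ 1)
    (l u : S → ℝ) (hl : ∀ s, 0 ≤ l s) (hlu : ∀ s, l s ≤ u s)
    (Γ : Set (S → ℝ))
    (hΓ : Γ = {γ : S → ℝ | (∑ s, γ s) = 1 ∧ ∀ s, l s ≤ γ s ∧ γ s ≤ u s})
    (hne : Γ.Nonempty)
    (hlsum : (∑ s, l s) ≤ 1) (husum : 1 ≤ ∑ s, u s)
    (γstar : S → ℝ)
    (hγstar : ∀ s, γstar s = l s +
      min (u s - l s)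
        (max 0 ((1 - ∑ t, l t) - ∑ t ∈ Finset.univ.filter (fun t => t < s), (u t - l t)))) :
    γstar ∈ Γ ∧ ∀ γ ∈ Γ, (∑ s, γstar s * p s) ≤ ∑ s, γ s * p s := by
  classical
  set R : ℝ := 1 - ∑ t, l t with hR
  set c : S → ℝ := fun s => u s - l s with hc
  set F : S → ℝ := fun s => ∑ t ∈ Finset.univ.filter (fun t => t < s), c t with hFdef
  have hc0 : ∀ s, 0 ≤ c s := fun s => sub_nonneg.2 (hlu s)
  have hR0 : 0 ≤ R := sub_nonneg.2 hlsum
  have hF0 : ∀ s, 0 ≤ F s := fun s => Finset.sum_nonneg fun t _ => hc0 t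
  -- key identity
  have key : ∀ s, min (c s) (max 0 (R - F s)) = min R (F s + c s) - min R (F s) := by
    intro s
    rcases le_total R (F s) with h | h
    · rw [min_eq_left h, min_eq_left (h.trans (by linarith [hc0 s]))]
      rw [max_eq_left (by linarith), min_eq_right (hc0 s)]; ring
    · rw [min_eq_right h, max_eq_right (by linarith)]
      rcases le_total R (F s + c s) with h2 | h2
      · rw [min_eq_left h2, min_eq_right (by linarith)]
      · rw [min_eq_right h2, min_eq_left (by linarith)]; ring
  have hγ' : ∀ s, γstar s = l s + (min R (F s + c s) - min R (F s)) := by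
    intro s; rw [hγstar s, ← key s]
  -- bounds
  have hlb : ∀ s, l s ≤ γstar s := by
    intro s
    rw [hγstar s]
    have : (0:ℝ) ≤ min (c s) (max 0 (R - F s)) :=
      le_min (hc0 s) (le_max_left _ _)
    linarith
  have hub : ∀ s, γstar s ≤ u s := by
    intro s
    rw [hγstar s]
    have : min (c s) (max 0 (R - F s)) ≤ c s := min_le_left _ _
    simp only [hc] at this ⊢
    linarith
  -- telescoping sum
  set n := Fintype.card S with hn
  set e : Fin n ≃o S := monoEquivOfFin S rfl with he
  set cnat : ℕ → ℝ := fun k => if h : k < n then c (e ⟨k, h⟩) else 0 with hcnat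
  have hcnatf : ∀ i : Fin n, cnat i = c (e i) := by
    intro i; simp [hcnat, i.isLt]
  have hFe : ∀ i : Fin n, F (e i) = ∑ k ∈ Finset.range i, cnat k := by
    intro i
    have h1 : F (e i) = ∑ t : S, if t < e i then c t else 0 := by
      simp only [hFdef]
      rw [Finset.sum_filter]
    have h2 : ∑ t : S, (if t < e i then c t else 0)
        = ∑ j : Fin n, (if (j:ℕ) < (i:ℕ) then cnat j else 0) := by
      rw [← Equiv.sum_comp e.toEquiv (fun t => if t < e i then c t else 0)]
      refine Finset.sum_congr rfl fun j _ => ?_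
      have hje : e.toEquiv j = e j := rfl
      have hiff : e.toEquiv j < e i ↔ (j:ℕ) < (i:ℕ) := by
        rw [hje, e.lt_iff_lt, Fin.lt_def]
      rw [if_congr hiff rfl rfl, hcnatf j, hje]
    have h3 : ∑ j : Fin n, (if (j:ℕ) < (i:ℕ) then cnat j else 0)
        = ∑ k ∈ Finset.range n, (if k < (i:ℕ) then cnat k else 0) :=
      Fin.sum_univ_eq_sum_range (fun k => if k < (i:ℕ) then cnat k else 0) n
    have h4 : ∑ k ∈ Finset.range n, (if k < (i:ℕ) then cnat k else 0)
        = ∑ k ∈ Finset.range i, cnat k := by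
      rw [← Finset.sum_filter]
      congr 1
      ext k
      simp only [Finset.mem_filter, Finset.mem_range]
      have := i.isLt
      omega
    rw [h1, h2, h3, h4]
  set G : ℕ → ℝ := fun k => min R (∑ j ∈ Finset.range k, cnat j) with hG
  have hsum_g : ∑ s, (γstar s - l s) = R := by
    have step : ∀ i : Fin n, γstar (e i) - l (e i) = G (i+1) - G i := by
      intro i
      rw [hγ' (e i)]
      have h1 : G (i+1) = min R (F (e i) + c (e i)) := by
        rw [hG]; simp only []
        rw [Finset.sum_range_succ, ← hFe i, hcnatf i]
      have h2 : G i = min R (F (e i)) := by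
        rw [hG]; simp only []; rw [← hFe i]
      rw [h1, h2]; ring
    have h5 : ∑ s, (γstar s - l s) = ∑ i : Fin n, (γstar (e i) - l (e i)) :=
      (Equiv.sum_comp e.toEquiv (fun s => γstar s - l s)).symm
    have h6 : ∑ i : Fin n, (γstar (e i) - l (e i)) = ∑ i : Fin n, (G ((i:ℕ)+1) - G i) :=
      Finset.sum_congr rfl fun i _ => step i
    have h7 : ∑ i : Fin n, (G ((i:ℕ)+1) - G i) = ∑ k ∈ Finset.range n, (G (k+1) - G k) :=
      Fin.sum_univ_eq_sum_range (fun k => G (k+1) - G k) n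
    have h8 : ∑ k ∈ Finset.range n, (G (k+1) - G k) = G n - G 0 :=
      Finset.sum_range_sub G n
    have hG0 : G 0 = 0 := by simp [hG, min_eq_right hR0]
    have hcsum : ∑ j ∈ Finset.range n, cnat j = ∑ s, c s := by
      rw [← Fin.sum_univ_eq_sum_range cnat n]
      rw [← Equiv.sum_comp e.toEquiv c]
      exact Finset.sum_congr rfl fun i _ => hcnatf i
    have hGn : G n = R := by
      rw [hG]; simp only []
      rw [hcsum]
      refine min_eq_left ?_
      have : ∑ s, c s = (∑ s, u s) - ∑ s, l s := by
        rw [hc]; rw [Finset.sum_sub_distrib]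
      rw [this, hR]; linarith
    rw [h5, h6, h7, h8, hG0, hGn]; ring
  have hsum1 : ∑ s, γstar s = 1 := by
    have : ∑ s, (γstar s - l s) = (∑ s, γstar s) - ∑ s, l s := by
      rw [Finset.sum_sub_distrib]
    rw [this, hR] at hsum_g
    linarith
  have hmem : γstar ∈ Γ := by
    rw [hΓ]; exact ⟨hsum1, fun s => ⟨hlb s, hub s⟩⟩
  refine ⟨hmem, ?_⟩
  -- optimality
  intro γ hγ
  rw [hΓ] at hγ
  obtain ⟨hγ1, hγbd⟩ := hγ
  -- crossing lemma
  have cross : ∀ s t, l s < γstar s → γstar t < u t → p s ≤ p t := by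
    intro s t hs ht
    have hs' : F s < R := by
      rw [hγstar s] at hs
      by_contra hcon
      push_neg at hcon
      rw [max_eq_left (by linarith), min_eq_right (hc0 s)] at hs
      linarith
    have ht' : R < F t + c t := by
      by_contra hcon
      push_neg at hcon
      have hclt : c t ≤ R - F t := by linarith
      rw [hγstar t, max_eq_right (by linarith [hF0 t, hc0 t] : (0:ℝ) ≤ R - F t),
        min_eq_left hclt] at ht
      have hct : c t = u t - l t := rfl
      linarith
    have hst : s ≤ t := by
      by_contra hcon
      push_neg at hcon
      -- t < s, so F t + c t ≤ F s
      have hsub : insert t (Finset.univ.filter (fun r => r < t)) ⊆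
          Finset.univ.filter (fun r => r < s) := by
        intro r hr
        rcases Finset.mem_insert.1 hr with rfl | hr'
        · simp [hcon]
        · simp only [Finset.mem_filter, Finset.mem_univ, true_and] at hr' ⊢
          exact hr'.trans hcon
      have hle : F t + c t ≤ F s := by
        have h1 : ∑ r ∈ insert t (Finset.univ.filter (fun r => r < t)), c r
            = c t + F t := by
          rw [Finset.sum_insert (by simp)]
        have h2 : ∑ r ∈ insert t (Finset.univ.filter (fun r => r < t)), c r ≤ F s :=
          Finset.sum_le_sum_of_subset_of_nonneg hsub (fun r _ _ => hc0 r)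
        linarith
      linarith
    exact hp hst
  by_cases hA : (Finset.univ.filter (fun s => l s < γstar s)).Nonempty
  · set s0 := (Finset.univ.filter (fun s => l s < γstar s)).max' hA with hs0
    have hs0mem : l s0 < γstar s0 := by
      have := (Finset.univ.filter (fun s => l s < γstar s)).max'_mem hA
      simpa using this
    set θ := p s0 with hθ
    have hterm : ∀ s, 0 ≤ (γ s - γstar s) * (p s - θ) := by
      intro s
      rcases lt_trichotomy (γ s) (γstar s) with h | h | h
      · -- γ s < γstar s ⟹ l s < γstar s ⟹ s ≤ s0 ⟹ p s ≤ θ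
        have hls : l s < γstar s := lt_of_le_of_lt (hγbd s).1 h
        have hsmem : s ∈ Finset.univ.filter (fun s => l s < γstar s) := by simpa using hls
        have : s ≤ s0 := Finset.le_max' _ s hsmem
        have hpθ : p s ≤ θ := hp this
        nlinarith
      · simp [h]
      · -- γstar s < γ s ≤ u s ⟹ γstar s < u s ⟹ θ ≤ p s
        have hus : γstar s < u s := lt_of_lt_of_le h (hγbd s).2
        have hpθ : θ ≤ p s := cross s0 s hs0mem hus
        nlinarith
    have hdsum : ∑ s, (γ s - γstar s) = 0 := by
      rw [Finset.sum_sub_distrib, hγ1, hsum1]; ring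
    have hpos : 0 ≤ ∑ s, (γ s - γstar s) * (p s - θ) :=
      Finset.sum_nonneg fun s _ => hterm s
    have hexpand : ∑ s, (γ s - γstar s) * (p s - θ)
        = (∑ s, γ s * p s) - (∑ s, γstar s * p s) - θ * ∑ s, (γ s - γstar s) := by
      rw [Finset.mul_sum, ← Finset.sum_sub_distrib, ← Finset.sum_sub_distrib]
      exact Finset.sum_congr rfl fun s _ => by ring
    rw [hdsum, mul_zero, sub_zero] at hexpand
    linarith [hexpand ▸ hpos]
  · -- no s with l s < γstar s: γstar = l pointwise
    have heq : ∀ s, γstar s = l s := by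
      intro s
      have : ¬ l s < γstar s := by
        intro h
        exact hA ⟨s, by simpa using h⟩
      linarith [hlb s]
    refine Finset.sum_le_sum fun s _ => ?_
    have := (hγbd s).1
    have := (hp01 s).1
    rw [heq s]
    nlinarith
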